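/- arXiv:2602.18995 — 3 statements merged into one kernel-verified Lean document; each statement's English description precedes it below -/
import Mathlib

section
/- Every piezoelectric-type tensor T ∈ ℝ^{n×n×n} has at least one C-eigenvalue with associated unit left and right C-eigenvectors. -/
/-- `(lam, x, y)` is a C-eigentriple of the piezoelectric-type tensor `T`. -/
def CEigentriple {n : ℕ} (T : Fin n → Fin n → Fin n → ℝ) (lam : ℝ)
    (x y : Fin n → ℝ) : Prop :=
  (∀ i, ∑ j, ∑ k, T i j k * y j * y k = lam * x i) ∧
  (∀ k, ∑ i, ∑ j, T i j k * x i * y j = lam * y k) ∧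
  (∑ i, x i ^ 2 = 1) ∧ (∑ i, y i ^ 2 = 1)

private lemma quad_aux (b c : ℝ) (hc : 0 ≤ c) (h : ∀ t : ℝ, 0 ≤ 2*t*b + t^2*c) : b = 0 := by
  have hc1 : (0:ℝ) < c + 1 := by linarith
  obtain ⟨u, hu⟩ : ∃ u, b = u * (c+1) := ⟨b/(c+1), (div_mul_cancel₀ b hc1.ne').symm⟩
  subst hu
  have h2 : u^2*(c+2) ≤ 0 := by nlinarith [h (-u)]
  have h3 : u^2 ≤ 0 := by nlinarith [sq_nonneg u]
  have h4 : u = 0 := pow_eq_zero_iff two_ne_zero |>.mp (le_antisymm h3 (sq_nonneg u))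
  simp [h4]

private lemma lin_max {n : ℕ} (v x₀ : Fin n → ℝ) (hx₀ : ∑ i, x₀ i ^ 2 = 1) (lam : ℝ)
    (hle : ∀ x : Fin n → ℝ, (∑ i, x i ^ 2 = 1) → ∑ i, x i * v i ≤ lam)
    (heq : ∑ i, x₀ i * v i = lam) :
    ∀ i, v i = lam * x₀ i := by
  set s := ∑ i, v i ^ 2 with hs
  have hs0 : 0 ≤ s := Finset.sum_nonneg fun i _ => sq_nonneg _
  have hslam : s ≤ lam ^ 2 := by
    rcases eq_or_lt_of_le hs0 with h | h
    · rw [← h]; exact sq_nonneg lam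
    · set c := (Real.sqrt s)⁻¹ with hc
      have hc2 : c ^ 2 = s⁻¹ := by rw [hc, inv_pow, Real.sq_sqrt hs0]
      have hmem : ∑ i, (c * v i) ^ 2 = 1 := by
        calc ∑ i, (c * v i) ^ 2 = c ^ 2 * ∑ i, v i ^ 2 := by
              rw [Finset.mul_sum]; exact Finset.sum_congr rfl fun i _ => by ring
          _ = 1 := by rw [hc2, ← hs]; exact inv_mul_cancel₀ (ne_of_gt h)
      have h1 := hle _ hmem
      have h2 : ∑ i, (c * v i) * v i = Real.sqrt s := by
        calc ∑ i, (c * v i) * v i = c * ∑ i, v i ^ 2 := by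
              rw [Finset.mul_sum]; exact Finset.sum_congr rfl fun i _ => by ring
          _ = Real.sqrt s := by rw [← hs, hc, inv_mul_eq_div, Real.div_sqrt]
      have h3 : Real.sqrt s ≤ lam := h2 ▸ h1
      calc s = Real.sqrt s ^ 2 := (Real.sq_sqrt hs0).symm
        _ ≤ lam ^ 2 := pow_le_pow_left₀ (Real.sqrt_nonneg s) h3 2
  have hexp : ∑ i, (v i - lam * x₀ i) ^ 2
      = s - 2*lam*(∑ i, x₀ i * v i) + lam^2 * (∑ i, x₀ i ^ 2) := by
    calc ∑ i, (v i - lam * x₀ i) ^ 2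
        = ∑ i, (v i ^ 2 - 2*lam*(x₀ i * v i) + lam^2 * x₀ i ^ 2) :=
          Finset.sum_congr rfl fun i _ => by ring
      _ = _ := by
          rw [Finset.sum_add_distrib, Finset.sum_sub_distrib, ← Finset.mul_sum, ← Finset.mul_sum,
            hs]
  have hzero : ∑ i, (v i - lam * x₀ i) ^ 2 = 0 := by
    have hle0 : ∑ i, (v i - lam * x₀ i) ^ 2 ≤ 0 := by
      rw [hexp, heq, hx₀]; nlinarith [hslam]
    exact le_antisymm hle0 (Finset.sum_nonneg fun i _ => sq_nonneg _)
  intro i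
  have h1 := (Finset.sum_eq_zero_iff_of_nonneg (fun i _ => sq_nonneg _)).mp hzero i
    (Finset.mem_univ i)
  have h2 := pow_eq_zero_iff two_ne_zero |>.mp h1
  linarith [h2]

private lemma quad_max {n : ℕ} (A : Fin n → Fin n → ℝ) (hA : ∀ j k, A j k = A k j)
    (y₀ : Fin n → ℝ) (hy₀ : ∑ j, y₀ j ^ 2 = 1) (lam : ℝ)
    (hle : ∀ y : Fin n → ℝ, (∑ j, y j ^ 2 = 1) → ∑ j, ∑ k, A j k * y j * y k ≤ lam)
    (heq : ∑ j, ∑ k, A j k * y₀ j * y₀ k = lam) :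
    ∀ k, ∑ j, A j k * y₀ j = lam * y₀ k := by
  have hle' : ∀ y : Fin n → ℝ, ∑ j, ∑ k, A j k * y j * y k ≤ lam * ∑ j, y j ^ 2 := by
    intro y
    have hr0 : 0 ≤ ∑ j, y j ^ 2 := Finset.sum_nonneg fun j _ => sq_nonneg _
    rcases eq_or_lt_of_le hr0 with h | h
    · have hy : ∀ j, y j = 0 := by
        intro j
        have := (Finset.sum_eq_zero_iff_of_nonneg (fun j _ => sq_nonneg _)).mp h.symm j
          (Finset.mem_univ j)
        exact pow_eq_zero_iff two_ne_zero |>.mp this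
      have hq0 : ∑ j, ∑ k, A j k * y j * y k = 0 :=
        Finset.sum_eq_zero fun j _ => Finset.sum_eq_zero fun k _ => by rw [hy j]; ring
      rw [hq0, ← h, mul_zero]
    · set r := ∑ j, y j ^ 2 with hr
      set c := (Real.sqrt r)⁻¹ with hc
      have hc2 : c ^ 2 = r⁻¹ := by rw [hc, inv_pow, Real.sq_sqrt hr0]
      have hunit : ∑ j, (c * y j) ^ 2 = 1 := by
        calc ∑ j, (c * y j) ^ 2 = c ^ 2 * ∑ j, y j ^ 2 := by
              rw [Finset.mul_sum]; exact Finset.sum_congr rfl fun j _ => by ring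
          _ = 1 := by rw [hc2, ← hr]; exact inv_mul_cancel₀ (ne_of_gt h)
      have h1 := hle _ hunit
      have h2 : ∑ j, ∑ k, A j k * (c * y j) * (c * y k)
          = c ^ 2 * ∑ j, ∑ k, A j k * y j * y k := by
        rw [Finset.mul_sum]
        refine Finset.sum_congr rfl fun j _ => ?_
        rw [Finset.mul_sum]
        exact Finset.sum_congr rfl fun k _ => by ring
      rw [h2, hc2] at h1
      calc ∑ j, ∑ k, A j k * y j * y k
          = r * (r⁻¹ * ∑ j, ∑ k, A j k * y j * y k) := by
            field_simp
        _ ≤ r * lam := mul_le_mul_of_nonneg_left h1 h.le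
        _ = lam * r := mul_comm _ _
  have hg : ∀ y : Fin n → ℝ, 0 ≤ lam * (∑ j, y j ^ 2) - ∑ j, ∑ k, A j k * y j * y k :=
    fun y => sub_nonneg.mpr (hle' y)
  have hB : ∀ z : Fin n → ℝ,
      lam * (∑ j, z j * y₀ j) - ∑ j, ∑ k, A j k * z j * y₀ k = 0 := by
    intro z
    have hexp : ∀ t : ℝ,
        lam * (∑ j, (y₀ j + t * z j) ^ 2)
          - ∑ j, ∑ k, A j k * (y₀ j + t * z j) * (y₀ k + t * z k)
        = 2*t*(lam * (∑ j, z j * y₀ j) - ∑ j, ∑ k, A j k * z j * y₀ k)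
          + t^2*(lam * (∑ j, z j ^ 2) - ∑ j, ∑ k, A j k * z j * z k) := by
      intro t
      have e1 : ∑ j, (y₀ j + t * z j) ^ 2
          = (∑ j, y₀ j ^ 2) + 2*t*(∑ j, z j * y₀ j) + t^2*(∑ j, z j ^ 2) := by
        rw [Finset.mul_sum, Finset.mul_sum, ← Finset.sum_add_distrib, ← Finset.sum_add_distrib]
        exact Finset.sum_congr rfl fun j _ => by ring
      have e2 : ∑ j, ∑ k, A j k * (y₀ j + t * z j) * (y₀ k + t * z k)
          = (∑ j, ∑ k, A j k * y₀ j * y₀ k) + t*(∑ j, ∑ k, A j k * z j * y₀ k)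
            + t*(∑ j, ∑ k, A j k * y₀ j * z k) + t^2*(∑ j, ∑ k, A j k * z j * z k) := by
        rw [Finset.mul_sum, Finset.mul_sum, Finset.mul_sum]
        rw [← Finset.sum_add_distrib, ← Finset.sum_add_distrib, ← Finset.sum_add_distrib]
        refine Finset.sum_congr rfl fun j _ => ?_
        rw [Finset.mul_sum, Finset.mul_sum, Finset.mul_sum]
        rw [← Finset.sum_add_distrib, ← Finset.sum_add_distrib, ← Finset.sum_add_distrib]
        exact Finset.sum_congr rfl fun k _ => by ring
      have e3 : ∑ j, ∑ k, A j k * y₀ j * z k = ∑ j, ∑ k, A j k * z j * y₀ k := by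
        rw [Finset.sum_comm]
        exact Finset.sum_congr rfl fun c _ => Finset.sum_congr rfl fun d _ => by rw [hA]; ring
      rw [e1, e2, e3, hy₀, heq]; ring
    exact quad_aux _ _ (hg z) (fun t => by rw [← hexp t]; exact hg _)
  intro k
  have h := hB (fun j => if j = k then 1 else 0)
  simp only [ite_mul, mul_ite, one_mul, zero_mul, mul_one, mul_zero,
    Finset.sum_ite_irrel, Finset.sum_const_zero,
    Finset.sum_ite_eq', Finset.mem_univ, if_true] at h
  calc ∑ j, A j k * y₀ j = ∑ j, A k j * y₀ j :=
        Finset.sum_congr rfl fun j _ => by rw [hA]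
    _ = lam * y₀ k := by linarith [h]

theorem stmt3 (n : ℕ) (hn : 0 < n) (T : Fin n → Fin n → Fin n → ℝ)
    (hsym : ∀ i j k, T i j k = T i k j) :
    ∃ (lam : ℝ) (x y : Fin n → ℝ), CEigentriple T lam x y := by
  classical
  set S : Set (Fin n → ℝ) := {x | ∑ i, x i ^ 2 = 1} with hSdef
  have hScompact : IsCompact S := by
    have hcl : IsClosed S := isClosed_eq (by continuity) continuous_const
    refine (isCompact_closedBall (0 : Fin n → ℝ) 1).of_isClosed_subset hcl ?_
    intro x hx
    simp only [Metric.mem_closedBall, dist_zero_right]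
    rw [pi_norm_le_iff_of_nonneg (by norm_num)]
    intro i
    rw [Real.norm_eq_abs, ← sq_le_one_iff_abs_le_one]
    calc x i ^ 2 ≤ ∑ j, x j ^ 2 :=
          Finset.single_le_sum (fun j _ => sq_nonneg (x j)) (Finset.mem_univ i)
      _ = 1 := hx
  have heS : (fun i : Fin n => if i = ⟨0, hn⟩ then (1:ℝ) else 0) ∈ S := by
    show ∑ i : Fin n, (if i = ⟨0, hn⟩ then (1:ℝ) else 0) ^ 2 = 1
    simp [ite_pow, Finset.sum_ite_eq']
  have hcont : Continuous fun p : (Fin n → ℝ) × (Fin n → ℝ) =>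
      ∑ i, ∑ j, ∑ k, T i j k * p.1 i * p.2 j * p.2 k := by fun_prop
  obtain ⟨⟨x₀, y₀⟩, hmem, hmax⟩ := (hScompact.prod hScompact).exists_isMaxOn
    ⟨(_, _), Set.mk_mem_prod heS heS⟩ hcont.continuousOn
  rw [isMaxOn_iff] at hmax
  have hx₀ : ∑ i, x₀ i ^ 2 = 1 := hmem.1
  have hy₀ : ∑ i, y₀ i ^ 2 = 1 := hmem.2
  set lam := ∑ i, ∑ j, ∑ k, T i j k * x₀ i * y₀ j * y₀ k with hlam
  have hub : ∀ x : Fin n → ℝ, (∑ i, x i ^ 2 = 1) → ∀ y : Fin n → ℝ, (∑ i, y i ^ 2 = 1) →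
      (∑ i, ∑ j, ∑ k, T i j k * x i * y j * y k) ≤ lam := by
    intro x hx y hy
    exact hmax (x, y) (Set.mk_mem_prod hx hy)
  have hfv : ∀ x : Fin n → ℝ, (∑ i, ∑ j, ∑ k, T i j k * x i * y₀ j * y₀ k)
      = ∑ i, x i * (∑ j, ∑ k, T i j k * y₀ j * y₀ k) := by
    intro x
    refine Finset.sum_congr rfl fun i _ => ?_
    rw [Finset.mul_sum]
    refine Finset.sum_congr rfl fun j _ => ?_
    rw [Finset.mul_sum]
    exact Finset.sum_congr rfl fun k _ => by ring
  have heq1 : ∀ i, (∑ j, ∑ k, T i j k * y₀ j * y₀ k) = lam * x₀ i :=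
    lin_max _ x₀ hx₀ lam (fun x hx => by rw [← hfv x]; exact hub x hx y₀ hy₀)
      (by rw [← hfv x₀, ← hlam])
  have hfq : ∀ y : Fin n → ℝ, (∑ i, ∑ j, ∑ k, T i j k * x₀ i * y j * y k)
      = ∑ j, ∑ k, (∑ i, T i j k * x₀ i) * y j * y k := by
    intro y
    rw [Finset.sum_comm]
    refine Finset.sum_congr rfl fun j _ => ?_
    rw [Finset.sum_comm]
    refine Finset.sum_congr rfl fun k _ => ?_
    rw [Finset.sum_mul, Finset.sum_mul]
  have hAsym : ∀ j k, (∑ i, T i j k * x₀ i) = ∑ i, T i k j * x₀ i :=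
    fun j k => Finset.sum_congr rfl fun i _ => by rw [hsym]
  have heq2 := quad_max (fun j k => ∑ i, T i j k * x₀ i) hAsym y₀ hy₀ lam
    (fun y hy => by rw [← hfq y]; exact hub x₀ hx₀ y hy)
    (by rw [← hfq y₀, ← hlam])
  refine ⟨lam, x₀, y₀, heq1, ?_, hx₀, hy₀⟩
  intro k
  calc ∑ i, ∑ j, T i j k * x₀ i * y₀ j
      = ∑ j, ∑ i, T i j k * x₀ i * y₀ j := Finset.sum_comm
    _ = ∑ j, (∑ i, T i j k * x₀ i) * y₀ j :=
        Finset.sum_congr rfl fun j _ => (Finset.sum_mul _ _ _).symm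
    _ = lam * y₀ k := heq2 k
end

section
/- The largest C-eigenvalue λ̃ of a piezoelectric-type tensor T satisfies λ̃ = max{ T x y y : x^T x = 1, y^T y = 1 }, where T x y y = Σ_{i,j,k} T_{ijk} x_i y_j y_k. -/
open Finset

set_option linter.unnecessarySeqFocus false


lemma sphereSet_compact (n : ℕ) : IsCompact {x : Fin n → ℝ | ∑ i, x i ^ 2 = 1} := by
  have hclosed : IsClosed {x : Fin n → ℝ | ∑ i, x i ^ 2 = 1} :=
    isClosed_eq (by fun_prop) continuous_const
  refine IsCompact.of_isClosed_subset
    (isCompact_univ_pi fun _ => isCompact_Icc (a := (-1:ℝ)) (b := 1)) hclosed ?_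
  intro x hx
  intro i _
  have h1 : x i ^ 2 ≤ 1 := by
    calc x i ^ 2 ≤ ∑ j, x j ^ 2 :=
      Finset.single_le_sum (fun j _ => sq_nonneg (x j)) (mem_univ i)
    _ = 1 := hx
  constructor
  · nlinarith [sq_nonneg (x i + 1)]
  · nlinarith [sq_nonneg (x i - 1)]

lemma quad_aux_pos {β γ : ℝ} (hβ : 0 < β) (h : ∀ t : ℝ, 2*t*β + t^2*γ ≤ 0) : False := by
  rcases le_or_gt 0 γ with hγ | hγ
  · have := h 1; nlinarith
  · have h2 := h (-β/γ)
    have hγ' : γ ≠ 0 := hγ.ne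
    have hu : (-β/γ) * γ = -β := div_mul_cancel₀ _ hγ'
    have hupos : 0 < -β/γ := by
      apply div_pos_of_neg_of_neg <;> linarith
    nlinarith [mul_pos hupos hβ]

lemma quad_aux_s4 {β γ : ℝ} (h : ∀ t : ℝ, 2*t*β + t^2*γ ≤ 0) : β = 0 := by
  rcases lt_trichotomy β 0 with hβ | h0 | hβ
  · exact absurd (quad_aux_pos (β := -β) (γ := γ) (by linarith)
      (fun t => by nlinarith [h (-t)])) id
  · exact h0
  · exact absurd (quad_aux_pos hβ h) id

lemma triple_factor (n : ℕ) (T : Fin n → Fin n → Fin n → ℝ) (x y : Fin n → ℝ) :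
    ∑ i, ∑ j, ∑ k, T i j k * x i * y j * y k = ∑ i, x i * ∑ j, ∑ k, T i j k * y j * y k := by
  refine Finset.sum_congr rfl fun i _ => ?_
  rw [Finset.mul_sum]
  refine Finset.sum_congr rfl fun j _ => ?_
  rw [Finset.mul_sum]
  exact Finset.sum_congr rfl fun k _ => by ring


lemma expand_norm (n : ℕ) (y : Fin n → ℝ) (k : Fin n) (t : ℝ) :
    ∑ j, (y j + t * (if j = k then 1 else 0)) ^ 2 = (∑ j, y j ^ 2) + 2*t*y k + t^2 := by
  have h : ∀ j ∈ Finset.univ, (y j + t * (if j = k then 1 else 0)) ^ 2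
      = y j ^ 2 + (if j = k then 2*t*y j else 0) + (if j = k then t^2 else 0) := by
    intro j _
    by_cases hj : j = k <;> simp [hj] <;> ring
  rw [Finset.sum_congr rfl h, Finset.sum_add_distrib, Finset.sum_add_distrib]
  simp [Finset.sum_ite_eq']

lemma expand_quad (n : ℕ) (T : Fin n → Fin n → Fin n → ℝ)
    (hsym : ∀ i j k, T i j k = T i k j) (x y : Fin n → ℝ) (k : Fin n) (t : ℝ) :
    ∑ i, ∑ j, ∑ k', T i j k' * x i * (y j + t * (if j = k then 1 else 0))
        * (y k' + t * (if k' = k then 1 else 0))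
      = (∑ i, ∑ j, ∑ k', T i j k' * x i * y j * y k')
        + 2*t*(∑ i, ∑ j, T i j k * x i * y j) + t^2*(∑ i, T i k k * x i) := by
  have h : ∀ (i j k' : Fin n), T i j k' * x i * (y j + t * (if j = k then 1 else 0))
        * (y k' + t * (if k' = k then 1 else 0))
      = T i j k' * x i * y j * y k'
        + (if j = k then t * (T i j k' * x i * y k') else 0)
        + (if k' = k then t * (T i j k' * x i * y j) else 0)
        + (if j = k then (if k' = k then t^2 * (T i j k' * x i) else 0) else 0) := by
    intro i j k'
    by_cases hj : j = k <;> by_cases hk : k' = k <;> simp [hj, hk] <;> ring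
  simp_rw [h, Finset.sum_add_distrib]
  have hBB : ∑ i, ∑ k', T i k k' * x i * y k' = ∑ i, ∑ j, T i j k * x i * y j :=
    Finset.sum_congr rfl fun i _ => Finset.sum_congr rfl fun j _ => by rw [hsym i k j]
  simp only [Finset.sum_ite_irrel, Finset.sum_const_zero, Finset.sum_ite_eq',
    Finset.mem_univ, if_true]
  simp_rw [← Finset.mul_sum]
  rw [hBB]
  ring

lemma sum_sub_sq (n : ℕ) (a b : Fin n → ℝ) (c : ℝ) :
    ∑ i, (a i - c * b i) ^ 2
      = (∑ i, a i ^ 2) - 2 * c * (∑ i, b i * a i) + c ^ 2 * ∑ i, b i ^ 2 := by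
  rw [Finset.mul_sum, Finset.mul_sum, ← Finset.sum_sub_distrib, ← Finset.sum_add_distrib]
  exact Finset.sum_congr rfl fun i _ => by ring

theorem stmt4 (n : ℕ) (T : Fin n → Fin n → Fin n → ℝ)
    (hsym : ∀ i j k, T i j k = T i k j) (lamMax : ℝ)
    (hmax : IsGreatest {lam : ℝ | ∃ x y : Fin n → ℝ, CEigentriple T lam x y} lamMax) :
    IsGreatest {v : ℝ | ∃ x y : Fin n → ℝ, (∑ i, x i ^ 2 = 1) ∧ (∑ i, y i ^ 2 = 1) ∧
      v = ∑ i, ∑ j, ∑ k, T i j k * x i * y j * y k} lamMax := by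
  obtain ⟨hmem, hub⟩ := hmax
  obtain ⟨x', y', heq1, heq2, hx', hy'⟩ := hmem
  -- lamMax is nonnegative
  have hneg : -lamMax ∈ {lam : ℝ | ∃ x y : Fin n → ℝ, CEigentriple T lam x y} := by
    refine ⟨fun i => -x' i, y', fun i => ?_, fun k => ?_, ?_, hy'⟩
    · rw [heq1 i]; ring
    · rw [show (-lamMax) * y' k = -(lamMax * y' k) by ring, ← heq2 k, ← Finset.sum_neg_distrib]
      refine Finset.sum_congr rfl fun i _ => ?_
      rw [← Finset.sum_neg_distrib]
      exact Finset.sum_congr rfl fun j _ => by ring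
    · simpa using hx'
  have hlam0 : 0 ≤ lamMax := by have := hub hneg; linarith
  constructor
  · -- lamMax is attained
    refine ⟨x', y', hx', hy', ?_⟩
    rw [triple_factor]
    have : ∀ i ∈ Finset.univ, x' i * ∑ j, ∑ k, T i j k * y' j * y' k
        = lamMax * x' i ^ 2 := fun i _ => by rw [heq1 i]; ring
    rw [Finset.sum_congr rfl this, ← Finset.mul_sum, hx', mul_one]
  · -- upper bound
    rintro v ⟨x, y, hx, hy, rfl⟩
    -- maximize f on the product of spheres
    set S₁ : Set (Fin n → ℝ) := {x : Fin n → ℝ | ∑ i, x i ^ 2 = 1} with hS₁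
    set f : (Fin n → ℝ) × (Fin n → ℝ) → ℝ :=
      fun p => ∑ i, ∑ j, ∑ k, T i j k * p.1 i * p.2 j * p.2 k with hf
    have hcont : Continuous f := by fun_prop
    obtain ⟨p₀, hp₀S, hp₀max⟩ := (IsCompact.prod (sphereSet_compact n)
      (sphereSet_compact n)).exists_isMaxOn ⟨(x', y'), hx', hy'⟩ hcont.continuousOn
    obtain ⟨hx₀, hy₀⟩ := hp₀S
    set x₀ := p₀.1
    set y₀ := p₀.2
    set M := f p₀ with hM
    have hxyM : f (x, y) ≤ M := hp₀max (Set.mk_mem_prod hx hy)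
    suffices hMlam : M ≤ lamMax by exact le_trans hxyM hMlam
    rcases le_or_gt M 0 with hM0 | hM0
    · linarith
    -- M > 0 : show (M, x₀, y₀) is a C-eigentriple
    -- Step 1: the x-equation
    set v : Fin n → ℝ := fun i => ∑ j, ∑ k, T i j k * y₀ j * y₀ k with hv
    have hMv : M = ∑ i, x₀ i * v i := by
      rw [hM, hf]; exact triple_factor n T x₀ y₀
    have hvle : ∀ z : Fin n → ℝ, (∑ i, z i ^ 2 = 1) → ∑ i, z i * v i ≤ M := by
      intro z hz
      have := hp₀max (Set.mk_mem_prod hz hy₀)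
      rw [hf] at this
      calc ∑ i, z i * v i = ∑ i, ∑ j, ∑ k, T i j k * z i * y₀ j * y₀ k :=
            (triple_factor n T z y₀).symm
        _ ≤ M := this
    have hssq : ∑ i, v i ^ 2 ≤ M ^ 2 := by
      rcases eq_or_ne (∑ i, v i ^ 2) 0 with h0 | h0
      · rw [h0]; exact sq_nonneg M
      · have hpos : 0 < ∑ i, v i ^ 2 :=
          (Finset.sum_nonneg fun i _ => sq_nonneg _).lt_of_ne (Ne.symm h0)
        set s := Real.sqrt (∑ i, v i ^ 2) with hs
        have hspos : 0 < s := Real.sqrt_pos.mpr hpos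
        have hs2 : s ^ 2 = ∑ i, v i ^ 2 := Real.sq_sqrt hpos.le
        have hunit : ∑ i, (v i / s) ^ 2 = 1 := by
          simp_rw [div_pow]
          rw [← Finset.sum_div, ← hs2]
          exact div_self (pow_ne_zero 2 hspos.ne')
        have := hvle (fun i => v i / s) hunit
        have hsum : ∑ i, v i / s * v i = s := by
          have h1 : ∀ i ∈ Finset.univ, v i / s * v i = v i ^ 2 / s :=
            fun i _ => by ring
          rw [Finset.sum_congr rfl h1, ← Finset.sum_div, ← hs2, pow_two,
            mul_div_assoc, div_self hspos.ne', mul_one]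
        rw [hsum] at this
        nlinarith
    have heqx : ∀ i, v i = M * x₀ i := by
      have hzero : ∑ i, (v i - M * x₀ i) ^ 2 = 0 := by
        have expand : ∑ i, (v i - M * x₀ i) ^ 2
            = (∑ i, v i ^ 2) - 2 * M * (∑ i, x₀ i * v i) + M ^ 2 * ∑ i, x₀ i ^ 2 := by
          have := sum_sub_sq n v x₀ M
          calc ∑ i, (v i - M * x₀ i) ^ 2
              = (∑ i, v i ^ 2) - 2 * M * (∑ i, x₀ i * v i) + M ^ 2 * ∑ i, x₀ i ^ 2 := this
            _ = _ := rfl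
        have : ∑ i, (v i - M * x₀ i) ^ 2 ≤ 0 := by
          rw [expand, hx₀, ← hMv]; nlinarith
        have h2 : 0 ≤ ∑ i, (v i - M * x₀ i) ^ 2 :=
          Finset.sum_nonneg fun i _ => sq_nonneg _
        linarith
      intro i
      have := (Finset.sum_eq_zero_iff_of_nonneg (fun i _ => sq_nonneg (v i - M * x₀ i))).mp
        hzero i (Finset.mem_univ i)
      have := sq_eq_zero_iff.mp this
      linarith
    -- Step 2: the y-equation
    have hφle : ∀ z : Fin n → ℝ,
        (∑ i, ∑ j, ∑ k, T i j k * x₀ i * z j * z k) ≤ M * ∑ j, z j ^ 2 := by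
      intro z
      rcases eq_or_ne (∑ j, z j ^ 2) 0 with h0 | h0
      · have hz : ∀ j, z j = 0 := by
          intro j
          have h1 := (Finset.sum_eq_zero_iff_of_nonneg
            (fun j _ => sq_nonneg (z j))).mp h0 j (Finset.mem_univ j)
          exact pow_eq_zero_iff two_ne_zero |>.mp h1
        have hzz : (∑ i, ∑ j, ∑ k, T i j k * x₀ i * z j * z k) = 0 :=
          Finset.sum_eq_zero fun i _ => Finset.sum_eq_zero fun j _ =>
            Finset.sum_eq_zero fun k _ => by rw [hz j]; ring
        rw [hzz, h0, mul_zero]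
      · have hpos : 0 < ∑ j, z j ^ 2 :=
          (Finset.sum_nonneg fun j _ => sq_nonneg _).lt_of_ne (Ne.symm h0)
        set s := Real.sqrt (∑ j, z j ^ 2) with hs
        have hspos : 0 < s := Real.sqrt_pos.mpr hpos
        have hs2 : s ^ 2 = ∑ j, z j ^ 2 := Real.sq_sqrt hpos.le
        have hunit : ∑ j, (z j / s) ^ 2 = 1 := by
          simp_rw [div_pow]
          rw [← Finset.sum_div, ← hs2]
          exact div_self (pow_ne_zero 2 hspos.ne')
        have hle : f (x₀, fun j => z j / s) ≤ f p₀ :=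
          hp₀max (Set.mk_mem_prod hx₀ hunit)
        have hval : f (x₀, fun j => z j / s)
            = (∑ i, ∑ j, ∑ k, T i j k * x₀ i * z j * z k) / s ^ 2 := by
          rw [hf, Finset.sum_div]
          refine Finset.sum_congr rfl fun i _ => ?_
          rw [Finset.sum_div]
          refine Finset.sum_congr rfl fun j _ => ?_
          rw [Finset.sum_div]
          refine Finset.sum_congr rfl fun k _ => ?_
          show T i j k * x₀ i * (z j / s) * (z k / s) = T i j k * x₀ i * z j * z k / s ^ 2
          have hsne : s ≠ 0 := hspos.ne'
          field_simp
        rw [hval] at hle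
        have h2 := (div_le_iff₀ (by positivity : (0:ℝ) < s ^ 2)).mp hle
        rw [hs2] at h2
        calc (∑ i, ∑ j, ∑ k, T i j k * x₀ i * z j * z k) ≤ f p₀ * ∑ j, z j ^ 2 := h2
          _ = M * ∑ j, z j ^ 2 := by rw [← hM]
    have heqy : ∀ k, ∑ i, ∑ j, T i j k * x₀ i * y₀ j = M * y₀ k := by
      intro k
      have key : ∀ t : ℝ, 2*t*((∑ i, ∑ j, T i j k * x₀ i * y₀ j) - M * y₀ k)
          + t^2*((∑ i, T i k k * x₀ i) - M) ≤ 0 := by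
        intro t
        have h1 := hφle (fun j => y₀ j + t * (if j = k then 1 else 0))
        rw [expand_quad n T hsym x₀ y₀ k t, expand_norm n y₀ k t, hy₀] at h1
        have hbase : (∑ i, ∑ j, ∑ k', T i j k' * x₀ i * y₀ j * y₀ k') = M := by
          rw [hM, hf]
        rw [hbase] at h1
        nlinarith [h1]
      have := quad_aux_s4 key
      linarith [this]
    have : M ∈ {lam : ℝ | ∃ x y : Fin n → ℝ, CEigentriple T lam x y} :=
      ⟨x₀, y₀, heqx, heqy, hx₀, hy₀⟩
    exact hub this
end

section
/- For the 4̄2m crystal class tensor T (T₁₂₃ = T₁₃₂ = T₂₁₃ = T₂₃₁ = T₃₁₂ = T₃₂₁ = χ₁₄, all other components zero), the largest C-eigenvalue equals λ_max = (2√3/3)|χ₁₄|; that is, max{ 2χ₁₄(x₁y₂y₃ + x₂y₁y₃ + x₃y₁y₂) : ‖x‖ = ‖y‖ = 1 } = (2/√3)|χ₁₄|. -/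
/-! Writing the form as `x₁(y₂y₃) + x₂(y₁y₃) + x₃(y₁y₂)`, Cauchy–Schwarz in `x` bounds its square by
`‖x‖² (y₁²y₂² + y₂²y₃² + y₃²y₁²)`, and `ab + bc + ca ≤ (a + b + c)² / 3` applied to the `yᵢ²` bounds
the second factor by `‖y‖⁴ / 3`. So on the unit spheres the form lies in `[-1/√3, 1/√3]`, and
`x = ±y = (1, 1, 1)/√3` attains either end; the sign of `χ` picks the end. -/

lemma sq_dot_three_le (a₁ a₂ a₃ b₁ b₂ b₃ : ℝ) :
    (a₁ * b₁ + a₂ * b₂ + a₃ * b₃) ^ 2 ≤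
      (a₁ ^ 2 + a₂ ^ 2 + a₃ ^ 2) * (b₁ ^ 2 + b₂ ^ 2 + b₃ ^ 2) := by
  nlinarith [sq_nonneg (a₁ * b₂ - a₂ * b₁), sq_nonneg (a₁ * b₃ - a₃ * b₁),
    sq_nonneg (a₂ * b₃ - a₃ * b₂)]

lemma mul_add_mul_add_mul_le_sq_div_three (a b c : ℝ) :
    a * b + b * c + c * a ≤ (a + b + c) ^ 2 / 3 := by
  nlinarith [sq_nonneg (a - b), sq_nonneg (b - c), sq_nonneg (c - a)]

lemma sq_trilinear_le (x₁ x₂ x₃ y₁ y₂ y₃ : ℝ) :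
    (x₁ * y₂ * y₃ + x₂ * y₁ * y₃ + x₃ * y₁ * y₂) ^ 2 ≤
      (x₁ ^ 2 + x₂ ^ 2 + x₃ ^ 2) * ((y₁ ^ 2 + y₂ ^ 2 + y₃ ^ 2) ^ 2 / 3) := by
  calc (x₁ * y₂ * y₃ + x₂ * y₁ * y₃ + x₃ * y₁ * y₂) ^ 2
      = (x₁ * (y₂ * y₃) + x₂ * (y₁ * y₃) + x₃ * (y₁ * y₂)) ^ 2 := by ring
    _ ≤ (x₁ ^ 2 + x₂ ^ 2 + x₃ ^ 2) * ((y₂ * y₃) ^ 2 + (y₁ * y₃) ^ 2 + (y₁ * y₂) ^ 2) :=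
        sq_dot_three_le ..
    _ = (x₁ ^ 2 + x₂ ^ 2 + x₃ ^ 2) * (y₁ ^ 2 * y₂ ^ 2 + y₂ ^ 2 * y₃ ^ 2 + y₃ ^ 2 * y₁ ^ 2) := by
        ring
    _ ≤ (x₁ ^ 2 + x₂ ^ 2 + x₃ ^ 2) * ((y₁ ^ 2 + y₂ ^ 2 + y₃ ^ 2) ^ 2 / 3) := by
        gcongr
        exact mul_add_mul_add_mul_le_sq_div_three ..

lemma sq_sqrt_three_div_three : (Real.sqrt 3 / 3) ^ 2 = 1 / 3 := by
  rw [div_pow, Real.sq_sqrt (by norm_num)]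
  norm_num

lemma abs_trilinear_le_of_sum_sq_eq_one {x₁ x₂ x₃ y₁ y₂ y₃ : ℝ}
    (hx : x₁ ^ 2 + x₂ ^ 2 + x₃ ^ 2 = 1) (hy : y₁ ^ 2 + y₂ ^ 2 + y₃ ^ 2 = 1) :
    |x₁ * y₂ * y₃ + x₂ * y₁ * y₃ + x₃ * y₁ * y₂| ≤ Real.sqrt 3 / 3 := by
  apply abs_le_of_sq_le_sq _ (by positivity)
  have h := sq_trilinear_le x₁ x₂ x₃ y₁ y₂ y₃
  rw [hx, hy] at h
  rw [sq_sqrt_three_div_three]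
  linarith

lemma exists_sq_eq_one_mul_eq_abs (χ : ℝ) : ∃ ε : ℝ, ε ^ 2 = 1 ∧ χ * ε = |χ| := by
  rcases le_total 0 χ with hχ | hχ
  · exact ⟨1, by norm_num, by rw [abs_of_nonneg hχ, mul_one]⟩
  · exact ⟨-1, by norm_num, by rw [abs_of_nonpos hχ, mul_neg_one]⟩

theorem stmt15 (χ : ℝ) :
    IsGreatest {v : ℝ | ∃ x1 x2 x3 y1 y2 y3 : ℝ,
        x1 ^ 2 + x2 ^ 2 + x3 ^ 2 = 1 ∧ y1 ^ 2 + y2 ^ 2 + y3 ^ 2 = 1 ∧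
        v = 2 * χ * (x1 * y2 * y3 + x2 * y1 * y3 + x3 * y1 * y2)}
      (2 * Real.sqrt 3 / 3 * |χ|) := by
  have hc := sq_sqrt_three_div_three
  constructor
  · obtain ⟨ε, hε, hχε⟩ := exists_sq_eq_one_mul_eq_abs χ
    set c := Real.sqrt 3 / 3
    refine ⟨ε * c, ε * c, ε * c, c, c, c, ?_, ?_, ?_⟩
    · linear_combination 3 * c ^ 2 * hε + 3 * hc
    · linear_combination 3 * hc
    · rw [← hχε]
      linear_combination (-6 * χ * ε * c) * hc
  · rintro v ⟨x₁, x₂, x₃, y₁, y₂, y₃, hx, hy, rfl⟩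
    have hs := abs_trilinear_le_of_sum_sq_eq_one hx hy
    calc 2 * χ * (x₁ * y₂ * y₃ + x₂ * y₁ * y₃ + x₃ * y₁ * y₂)
        ≤ 2 * (|χ| * |x₁ * y₂ * y₃ + x₂ * y₁ * y₃ + x₃ * y₁ * y₂|) := by
          rw [mul_assoc, ← abs_mul]
          exact mul_le_mul_of_nonneg_left (le_abs_self _) zero_le_two
      _ ≤ 2 * (|χ| * (Real.sqrt 3 / 3)) := by gcongr
      _ = 2 * Real.sqrt 3 / 3 * |χ| := by ring
end
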